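/- Let X0 = x2 ∂/∂x1 - x1 ∂/∂x2 + x5 ∂/∂x4 - x4 ∂/∂x5 + P ∂/∂x6 + Q ∂/∂x7 + R ∂/∂x8 with P = -x1⁴/24 + x1²x2²/8 + x7, Q = x1x2³/12 + x1³x2/12 - 2x6 + 2x8, R = x1²x2²/8 - x2⁴/24 - x7. Then with X1,...,X8 the symmetric model fields, one has [X0,X1]=X2, [X0,X2]=-X1, [X0,X3]=0, [X0,X4]=X5, [X0,X5]=-X4, [X0,X6]=2X7, [X0,X7]=X8-X6, [X0,X8]=-2X7. -/

import Mathlib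

/- The rotation field X0 is an infinitesimal symmetry of the symmetric model
of the (2,3,5,8) sub-Riemannian structure. -/

noncomputable section

abbrev Pt : Type := Fin 8 → ℝ
abbrev VF : Type := Pt → Pt

noncomputable def pd (f : Pt → ℝ) (x : Pt) (j : Fin 8) : ℝ :=
  fderiv ℝ f x (Pi.single j 1)

noncomputable def bracket (X Y : VF) : VF := fun x i =>
  ∑ j, (X x j * pd (fun y => Y y i) x j - Y x j * pd (fun y => X y i) x j)

noncomputable def X1 : VF := fun x =>
  ![1, 0, -(x 1)/2, 0, -((x 0)^2 + (x 1)^2)/2, 0, -(x 0)*(x 1)^2/4, -(x 1)^3/6]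
noncomputable def X2 : VF := fun x =>
  ![0, 1, (x 0)/2, ((x 0)^2 + (x 1)^2)/2, 0, (x 0)^3/6, (x 0)^2*(x 1)/4, 0]
noncomputable def X3 : VF := fun x =>
  ![0, 0, 1, x 0, x 1, (x 0)^2/2, (x 0)*(x 1), (x 1)^2/2]
noncomputable def X4 : VF := fun x => ![0, 0, 0, 1, 0, x 0, x 1, 0]
noncomputable def X5 : VF := fun x => ![0, 0, 0, 0, 1, 0, x 0, x 1]
noncomputable def X6 : VF := fun _ => ![0, 0, 0, 0, 0, 1, 0, 0]
noncomputable def X7 : VF := fun _ => ![0, 0, 0, 0, 0, 0, 1, 0]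
noncomputable def X8 : VF := fun _ => ![0, 0, 0, 0, 0, 0, 0, 1]

noncomputable def P (x : Pt) : ℝ := -(x 0)^4/24 + (x 0)^2*(x 1)^2/8 + x 6
noncomputable def Q (x : Pt) : ℝ := (x 0)*(x 1)^3/12 + (x 0)^3*(x 1)/12 - 2*(x 5) + 2*(x 7)
noncomputable def R (x : Pt) : ℝ := (x 0)^2*(x 1)^2/8 - (x 1)^4/24 - x 6

/-- X0 = x2 ∂₁ - x1 ∂₂ + x5 ∂₄ - x4 ∂₅ + P ∂₆ + Q ∂₇ + R ∂₈. -/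
noncomputable def X0 : VF := fun x =>
  ![x 1, -(x 0), 0, x 4, -(x 3), P x, Q x, R x]

/-!
Bracketing with `X0` is a derivation of the Lie algebra of vector fields (Jacobi identity), and the
model fields are iterated brackets of the generators:
`X3 = [X1, X2]`, `X4 = [X1, X3]`, `X5 = [X2, X3]`, `X6 = [X1, X4]`, `X7 = [X1, X5] = [X2, X4]`,
`X8 = [X2, X5]`. So once `[X0, X1] = X2` and `[X0, X2] = -X1` are checked by direct computation,
every other `[X0, Xk]` follows formally, e.g.
`[X0, X7] = [[X0, X1], X5] + [X1, [X0, X5]] = [X2, X5] - [X1, X4] = X8 - X6`.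
-/

@[simp]
theorem pd_coord (x : Pt) (i j : Fin 8) : pd (fun y => y i) x j = if j = i then 1 else 0 := by
  rw [pd, (hasFDerivAt_apply i x).fderiv]
  simp [Pi.single_apply, eq_comm]

@[simp]
theorem pd_const (c : ℝ) (x : Pt) (j : Fin 8) : pd (fun _ => c) x j = 0 := by
  simp [pd]

@[simp]
theorem pd_neg (f : Pt → ℝ) (x : Pt) (j : Fin 8) : pd (fun y => -f y) x j = -pd f x j := by
  simp [pd]

@[simp]
theorem pd_add {f g : Pt → ℝ} {x : Pt} (hf : DifferentiableAt ℝ f x)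
    (hg : DifferentiableAt ℝ g x) (j : Fin 8) :
    pd (fun y => f y + g y) x j = pd f x j + pd g x j := by
  simp [pd, fderiv_fun_add hf hg]

@[simp]
theorem pd_sub {f g : Pt → ℝ} {x : Pt} (hf : DifferentiableAt ℝ f x)
    (hg : DifferentiableAt ℝ g x) (j : Fin 8) :
    pd (fun y => f y - g y) x j = pd f x j - pd g x j := by
  simp [pd, fderiv_fun_sub hf hg]

@[simp]
theorem pd_mul {f g : Pt → ℝ} {x : Pt} (hf : DifferentiableAt ℝ f x)
    (hg : DifferentiableAt ℝ g x) (j : Fin 8) :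
    pd (fun y => f y * g y) x j = f x * pd g x j + g x * pd f x j := by
  simp [pd, fderiv_fun_mul hf hg]

@[simp]
theorem pd_div_const {f : Pt → ℝ} {x : Pt} (hf : DifferentiableAt ℝ f x) (c : ℝ) (j : Fin 8) :
    pd (fun y => f y / c) x j = pd f x j / c := by
  simp [pd, div_eq_mul_inv, fderiv_mul_const hf, mul_comm]

@[simp]
theorem pd_pow {f : Pt → ℝ} {x : Pt} (hf : DifferentiableAt ℝ f x) (n : ℕ) (j : Fin 8) :
    pd (fun y => f y ^ n) x j = n * f x ^ (n - 1) * pd f x j := by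
  simp [pd, fderiv_fun_pow n hf]

theorem sum_mul_pd_eq_fderiv (f : Pt → ℝ) (x v : Pt) : ∑ j, v j * pd f x j = fderiv ℝ f x v := by
  conv_rhs => rw [← Finset.univ_sum_single v, map_sum]
  refine Finset.sum_congr rfl fun j _ => ?_
  rw [pd, ← smul_eq_mul, ← map_smul, ← Pi.single_smul', smul_eq_mul, mul_one]

theorem bracket_eq_lieBracket {X Y : VF} (hX : Differentiable ℝ X) (hY : Differentiable ℝ Y) :
    bracket X Y = VectorField.lieBracket ℝ X Y := by
  funext x i
  simp only [bracket, VectorField.lieBracket, Finset.sum_sub_distrib, sum_mul_pd_eq_fderiv,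
    fderiv_apply (hY x), fderiv_apply (hX x)]
  rfl

theorem bracket_self (X : VF) : bracket X X = 0 := by
  funext x i
  simp [bracket]

theorem bracket_zero_right (X : VF) : bracket X 0 = 0 := by
  funext x i
  simp [bracket, pd]

theorem bracket_neg_left (X Y : VF) : bracket (-X) Y = -bracket X Y := by
  funext x i
  simp only [bracket, Pi.neg_apply, pd_neg, ← Finset.sum_neg_distrib]
  congr 1; ext j; ring

theorem bracket_neg_right (X Y : VF) : bracket X (-Y) = -bracket X Y := by
  funext x i
  simp only [bracket, Pi.neg_apply, pd_neg, ← Finset.sum_neg_distrib]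
  congr 1; ext j; ring

theorem leibniz_identity_bracket {U V W : VF} (hU : ContDiff ℝ 2 U) (hV : ContDiff ℝ 2 V)
    (hW : ContDiff ℝ 2 W) :
    bracket U (bracket V W) = bracket (bracket U V) W + bracket V (bracket U W) := by
  have hdiff {A : VF} (hA : ContDiff ℝ 2 A) : Differentiable ℝ A :=
    hA.differentiable two_ne_zero
  have hdiff_lie {A B : VF} (hA : ContDiff ℝ 2 A) (hB : ContDiff ℝ 2 B) :
      Differentiable ℝ (VectorField.lieBracket ℝ A B) :=
    (hA.lieBracket_vectorField hB (m := 1) (by norm_num)).differentiable one_ne_zero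
  rw [bracket_eq_lieBracket (hdiff hV) (hdiff hW), bracket_eq_lieBracket (hdiff hU) (hdiff hV),
    bracket_eq_lieBracket (hdiff hU) (hdiff hW), bracket_eq_lieBracket (hdiff hU) (hdiff_lie hV hW),
    bracket_eq_lieBracket (hdiff_lie hU hV) (hdiff hW),
    bracket_eq_lieBracket (hdiff hV) (hdiff_lie hU hW)]
  funext x
  exact VectorField.leibniz_identity_lieBracket (by simp) hU.contDiffAt hV.contDiffAt hW.contDiffAt

@[fun_prop]
theorem ContDiff.matrixVecCons {𝕜 E F : Type*} [NontriviallyNormedField 𝕜]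
    [NormedAddCommGroup E] [NormedSpace 𝕜 E] [NormedAddCommGroup F] [NormedSpace 𝕜 F]
    {n : WithTop ℕ∞} {m : ℕ} {f : E → F} {g : E → Fin m → F}
    (hf : ContDiff 𝕜 n f) (hg : ContDiff 𝕜 n g) :
    ContDiff 𝕜 n fun x => Matrix.vecCons (f x) (g x) :=
  contDiff_pi.2 fun i => Fin.cases hf (fun j => contDiff_pi.1 hg j) i

theorem contDiff_X0 {n : WithTop ℕ∞} : ContDiff ℝ n X0 := by unfold X0 P Q R; fun_prop
theorem contDiff_X1 {n : WithTop ℕ∞} : ContDiff ℝ n X1 := by unfold X1; fun_prop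
theorem contDiff_X2 {n : WithTop ℕ∞} : ContDiff ℝ n X2 := by unfold X2; fun_prop
theorem contDiff_X3 {n : WithTop ℕ∞} : ContDiff ℝ n X3 := by unfold X3; fun_prop
theorem contDiff_X4 {n : WithTop ℕ∞} : ContDiff ℝ n X4 := by unfold X4; fun_prop
theorem contDiff_X5 {n : WithTop ℕ∞} : ContDiff ℝ n X5 := by unfold X5; fun_prop

theorem bracket_X1_X2 : bracket X1 X2 = X3 := by
  funext x i
  fin_cases i <;> simp (disch := fun_prop) [bracket, X1, X2, X3, Fin.sum_univ_eight] <;> ring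

theorem bracket_X1_X3 : bracket X1 X3 = X4 := by
  funext x i
  fin_cases i <;> simp (disch := fun_prop) [bracket, X1, X3, X4, Fin.sum_univ_eight]
  ring

theorem bracket_X2_X3 : bracket X2 X3 = X5 := by
  funext x i
  fin_cases i <;> simp (disch := fun_prop) [bracket, X2, X3, X5, Fin.sum_univ_eight]
  ring

theorem bracket_X1_X4 : bracket X1 X4 = X6 := by
  funext x i
  fin_cases i <;> simp (disch := fun_prop) [bracket, X1, X4, X6, Fin.sum_univ_eight]

theorem bracket_X1_X5 : bracket X1 X5 = X7 := by
  funext x i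
  fin_cases i <;> simp (disch := fun_prop) [bracket, X1, X5, X7, Fin.sum_univ_eight]

theorem bracket_X2_X4 : bracket X2 X4 = X7 := by
  funext x i
  fin_cases i <;> simp (disch := fun_prop) [bracket, X2, X4, X7, Fin.sum_univ_eight]

theorem bracket_X2_X5 : bracket X2 X5 = X8 := by
  funext x i
  fin_cases i <;> simp (disch := fun_prop) [bracket, X2, X5, X8, Fin.sum_univ_eight]

theorem bracket_X0_X1 : bracket X0 X1 = X2 := by
  funext x i
  fin_cases i <;> simp (disch := fun_prop) [bracket, X0, X1, X2, P, Q, R, Fin.sum_univ_eight] <;>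
    ring

theorem bracket_X0_X2 : bracket X0 X2 = -X1 := by
  funext x i
  fin_cases i <;> simp (disch := fun_prop) [bracket, X0, X1, X2, P, Q, R, Fin.sum_univ_eight] <;>
    ring

theorem bracket_X0_X3 : bracket X0 X3 = 0 := by
  rw [← bracket_X1_X2, leibniz_identity_bracket contDiff_X0 contDiff_X1 contDiff_X2,
    bracket_X0_X1, bracket_X0_X2, bracket_neg_right, bracket_self, bracket_self, neg_zero,
    add_zero]

theorem bracket_X0_X4 : bracket X0 X4 = X5 := by
  rw [← bracket_X1_X3, leibniz_identity_bracket contDiff_X0 contDiff_X1 contDiff_X3,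
    bracket_X0_X1, bracket_X0_X3, bracket_zero_right, add_zero, bracket_X2_X3]

theorem bracket_X0_X5 : bracket X0 X5 = -X4 := by
  rw [← bracket_X2_X3, leibniz_identity_bracket contDiff_X0 contDiff_X2 contDiff_X3,
    bracket_X0_X2, bracket_X0_X3, bracket_zero_right, add_zero, bracket_neg_left, bracket_X1_X3]

theorem bracket_X0_X6 : bracket X0 X6 = (2 : ℝ) • X7 := by
  rw [← bracket_X1_X4, leibniz_identity_bracket contDiff_X0 contDiff_X1 contDiff_X4,
    bracket_X0_X1, bracket_X0_X4, bracket_X2_X4, bracket_X1_X5, two_smul]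

theorem bracket_X0_X7 : bracket X0 X7 = X8 - X6 := by
  rw [← bracket_X1_X5, leibniz_identity_bracket contDiff_X0 contDiff_X1 contDiff_X5,
    bracket_X0_X1, bracket_X0_X5, bracket_X2_X5, bracket_neg_right, bracket_X1_X4, sub_eq_add_neg]

theorem bracket_X0_X8 : bracket X0 X8 = -((2 : ℝ) • X7) := by
  rw [← bracket_X2_X5, leibniz_identity_bracket contDiff_X0 contDiff_X2 contDiff_X5,
    bracket_X0_X2, bracket_X0_X5, bracket_neg_left, bracket_neg_right, bracket_X1_X5,
    bracket_X2_X4, two_smul, neg_add]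

theorem X0_infinitesimal_symmetry :
    bracket X0 X1 = X2 ∧ bracket X0 X2 = (fun x i => -(X1 x i)) ∧
    bracket X0 X3 = (fun _ _ => 0) ∧
    bracket X0 X4 = X5 ∧ bracket X0 X5 = (fun x i => -(X4 x i)) ∧
    bracket X0 X6 = (fun x i => 2 * X7 x i) ∧
    bracket X0 X7 = (fun x i => X8 x i - X6 x i) ∧
    bracket X0 X8 = (fun x i => -(2 * X7 x i)) :=
  ⟨bracket_X0_X1, bracket_X0_X2, bracket_X0_X3, bracket_X0_X4, bracket_X0_X5, bracket_X0_X6,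
    bracket_X0_X7, bracket_X0_X8⟩

end
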